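/- There is a universal constant c > 0 such that the following holds: for every integer d ≥ 2 and all ε, δ ∈ (0,1/2), setting k = ⌈c·d/(ε²·δ)⌉, there exists a string s of length d^k that is not (d,ε,δ)-locally repetitive. -/

import Mathlib

open Finset
open scoped Classical

/-- The average of the block of `s` of length `len` starting at position `j * len`. -/
noncomputable def blockAvg (s : ℕ → ℝ) (len j : ℕ) : ℝ :=
  (∑ i ∈ Finset.range len, s (j * len + i)) / len

/-- For a string of length `d ^ k`, the level-`ℓ` aligned block with index `j`
(of length `d ^ (k - ℓ)`) is `(d, ε)`-repetitive: the average of each of its `d`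
consecutive sub-blocks (which are level-`(ℓ+1)` aligned blocks) is within `ε`
of the block's average. -/
def blockRep (s : ℕ → ℝ) (d k : ℕ) (ε : ℝ) (ℓ j : ℕ) : Prop :=
  ∀ i ∈ Finset.range d,
    |blockAvg s (d ^ (k - ℓ)) j - blockAvg s (d ^ (k - (ℓ + 1))) (j * d + i)| ≤ ε

/-- The fraction of level-`ℓ` aligned blocks of `s` that are not `(d, ε)`-repetitive. -/
noncomputable def badFrac (s : ℕ → ℝ) (d k : ℕ) (ε : ℝ) (ℓ : ℕ) : ℝ :=
  (((Finset.range (d ^ ℓ)).filter (fun j => ¬ blockRep s d k ε ℓ j)).card : ℝ) / (d ^ ℓ : ℝ)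

/-!
Label the nodes of the complete `d`-ary tree by a walk on `{0, …, m}` started at `m / 2` and
absorbed at the endpoints, with `m` the largest integer below `(d - 1) / ε`: an interior node sends
one child `d - 1` steps away and the other `d - 1` children one step back, so every label is the
mean of its children's labels. Divided by `m`, the leaf labels form a string whose block averages
are the node labels over `m`, and every interior node is a block that is not repetitive, since its
first sub-block is off by `(d - 1) / m > ε`. The squared distance from the start grows on average
by `d - 1` per interior node. So either half of the deepest level is interior, and then half of
every level is, or half of the leaves are absorbed at distance about `m / 2`, which forces the
summed fractions of interior nodes up to order `m² / d ≈ d / ε²`. Both beat `δ k`.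
-/

open scoped BigOperators

lemma Finset.expect_range_mul {M : Type*} [AddCommMonoid M] [Module ℚ≥0 M] (f : ℕ → M)
    (a b : ℕ) :
    𝔼 i ∈ range (a * b), f i = 𝔼 p ∈ range a, 𝔼 q ∈ range b, f (p * b + q) := by
  rw [← expect_product' (range a) (range b) fun p q => f (p * b + q)]
  refine expect_nbij' (fun i => (i / b, i % b)) (fun x => x.1 * b + x.2) ?_ ?_ ?_ ?_ ?_
  · intro i hi
    have hb : 0 < b := Nat.pos_of_mul_pos_left (Nat.zero_lt_of_lt (mem_range.1 hi))
    simp only [mem_product, mem_range] at hi ⊢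
    exact ⟨Nat.div_lt_of_lt_mul (by rwa [mul_comm]), Nat.mod_lt i hb⟩
  · rintro ⟨p, q⟩ h
    simp only [mem_product, mem_range] at h ⊢
    nlinarith
  · intro i _
    exact Nat.div_add_mod' i b
  · rintro ⟨p, q⟩ h
    simp only [mem_product, mem_range] at h
    have hb : 0 < b := Nat.zero_lt_of_lt h.2
    rw [Nat.mul_comm, Nat.mul_add_div hb, Nat.mul_add_mod, Nat.div_eq_of_lt h.2,
      Nat.mod_eq_of_lt h.2, add_zero]
  · intro i _
    simp only [Nat.div_add_mod']

lemma blockAvg_eq_expect (s : ℕ → ℝ) (len j : ℕ) :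
    blockAvg s len j = 𝔼 i ∈ range len, s (j * len + i) := by
  rw [blockAvg, expect_eq_sum_div_card, card_range]

lemma blockAvg_mul (s : ℕ → ℝ) (d len j : ℕ) :
    blockAvg s (d * len) j = 𝔼 p ∈ range d, blockAvg s len (j * d + p) := by
  simp only [blockAvg_eq_expect, expect_range_mul]
  refine expect_congr rfl fun p _ => expect_congr rfl fun q _ => ?_
  congr 1
  ring

lemma blockAvg_of_expect_children {d : ℕ} (f : ℕ → ℕ → ℝ)
    (hf : ∀ ℓ j, 𝔼 i ∈ range d, f (ℓ + 1) (j * d + i) = f ℓ j) (t ℓ j : ℕ) :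
    blockAvg (f (ℓ + t)) (d ^ t) j = f ℓ j := by
  induction t generalizing ℓ j with
  | zero => simp [blockAvg]
  | succ t ih =>
    rw [pow_succ', blockAvg_mul, ← hf, show ℓ + (t + 1) = ℓ + 1 + t by omega]
    exact expect_congr rfl fun p _ => ih (ℓ + 1) (j * d + p)

lemma expect_range_ite_eq_zero {d : ℕ} (hd : 0 < d) (a b : ℝ) :
    𝔼 i ∈ range d, (if i = 0 then a else b) = (a + (d - 1) * b) / d := by
  obtain ⟨n, rfl⟩ := Nat.exists_eq_add_of_lt hd
  rw [expect_eq_sum_div_card, sum_range_succ', card_range]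
  simp [add_comm]

lemma exists_nat_ge_lt_le_add_one {r : ℝ} {n : ℕ} (h : (n : ℝ) < r) :
    ∃ m : ℕ, n ≤ m ∧ (m : ℝ) < r ∧ r ≤ m + 1 := by
  have hceil : n < ⌈r⌉₊ := Nat.lt_ceil.2 h
  have hcast : ((⌈r⌉₊ - 1 : ℕ) : ℝ) + 1 = ⌈r⌉₊ := by
    rw [Nat.cast_sub (by omega), Nat.cast_one, sub_add_cancel]
  refine ⟨⌈r⌉₊ - 1, by omega, ?_, hcast ▸ Nat.le_ceil r⟩
  linarith [Nat.ceil_lt_add_one (h.le.trans' (Nat.cast_nonneg n))]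

namespace AbsorbedWalk

variable (d m : ℕ)

/-- From an interior point child `0` jumps `d - 1` steps (upwards if there is room) and every
other child steps once the other way, so that the children average to `x`. -/
def step (x i : ℕ) : ℕ :=
  if x = 0 ∨ x = m then x
  else if x + (d - 1) ≤ m then (if i = 0 then x + (d - 1) else x - 1)
  else (if i = 0 then x - (d - 1) else x + 1)

def pos (x₀ : ℕ) : ℕ → ℕ → ℕ
  | 0, _ => x₀
  | ℓ + 1, j => step d m (pos x₀ ℓ (j / d)) (j % d)

variable {d m}

lemma step_le {x : ℕ} (hx : x ≤ m) (i : ℕ) : step d m x i ≤ m := by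
  unfold step; split_ifs <;> omega

lemma step_of_not_interior {x : ℕ} (hx : x ≤ m) (h : ¬(0 < x ∧ x < m)) (i : ℕ) :
    step d m x i = x := by
  unfold step
  rw [if_pos (by omega)]

lemma step_of_interior (hd : 0 < d) (hm : 2 * (d - 1) ≤ m) {x : ℕ} (hx : 0 < x ∧ x < m) :
    ∃ σ : ℝ, (σ = 1 ∨ σ = -1) ∧
      ∀ i, (step d m x i : ℝ) = if i = 0 then x + σ * (d - 1) else x - σ := by
  simp only [step, if_neg (show ¬(x = 0 ∨ x = m) by omega)]
  by_cases h : x + (d - 1) ≤ m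
  · simp only [if_pos h]
    refine ⟨1, Or.inl rfl, fun i => ?_⟩
    split_ifs <;> push_cast [Nat.one_le_iff_ne_zero.2 hd.ne', Nat.one_le_iff_ne_zero.2 hx.1.ne']
      <;> ring
  · simp only [if_neg h]
    refine ⟨-1, Or.inr rfl, fun i => ?_⟩
    split_ifs <;> push_cast [show d - 1 ≤ x by omega, Nat.one_le_iff_ne_zero.2 hd.ne'] <;> ring

section Moments

variable (hd : 0 < d) (hm : 2 * (d - 1) ≤ m) {x : ℕ} (hx : x ≤ m)
include hd hm hx

lemma expect_step : 𝔼 i ∈ range d, (step d m x i : ℝ) = x := by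
  by_cases h : 0 < x ∧ x < m
  · obtain ⟨σ, -, hσ⟩ := step_of_interior hd hm h
    rw [expect_congr rfl fun i _ => hσ i, expect_range_ite_eq_zero hd]
    field_simp
    ring
  · simp_rw [step_of_not_interior hx h]
    exact expect_const (nonempty_range_iff.2 hd.ne') _

lemma expect_step_sub_sq (y : ℝ) :
    𝔼 i ∈ range d, ((step d m x i : ℝ) - y) ^ 2
      = (x - y) ^ 2 + (d - 1) * (if 0 < x ∧ x < m then 1 else 0) := by
  by_cases h : 0 < x ∧ x < m
  · obtain ⟨σ, hσ1, hσ⟩ := step_of_interior hd hm h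
    have hσ2 : σ ^ 2 = 1 := by rcases hσ1 with rfl | rfl <;> norm_num
    rw [expect_congr rfl fun i _ => by rw [hσ i, apply_ite (fun z => (z - y) ^ 2)],
      expect_range_ite_eq_zero hd, if_pos h]
    field_simp
    linear_combination (↑d - 1) * ↑d * hσ2
  · simp_rw [step_of_not_interior hx h, if_neg h]
    simp [expect_const (nonempty_range_iff.2 hd.ne')]

end Moments

lemma abs_step_zero_sub (hd : 0 < d) (hm : 2 * (d - 1) ≤ m) {x : ℕ} (hx : 0 < x ∧ x < m) :
    |(step d m x 0 : ℝ) - x| = d - 1 := by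
  obtain ⟨σ, hσ1, hσ⟩ := step_of_interior hd hm hx
  have hd1 : (1 : ℝ) ≤ d := by exact_mod_cast hd
  rw [hσ, if_pos rfl, add_sub_cancel_left, abs_mul,
    abs_of_nonneg (show (0 : ℝ) ≤ d - 1 by linarith)]
  rcases hσ1 with rfl | rfl <;> simp

variable {x₀ : ℕ}

lemma pos_le (hx₀ : x₀ ≤ m) (ℓ j : ℕ) : pos d m x₀ ℓ j ≤ m := by
  induction ℓ generalizing j with
  | zero => exact hx₀
  | succ ℓ ih => exact step_le (ih _) _

lemma pos_succ_mul_add (ℓ j : ℕ) {i : ℕ} (hi : i < d) :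
    pos d m x₀ (ℓ + 1) (j * d + i) = step d m (pos d m x₀ ℓ j) i := by
  have hd : 0 < d := Nat.zero_lt_of_lt hi
  rw [pos, Nat.mul_comm, Nat.mul_add_div hd, Nat.mul_add_mod, Nat.div_eq_of_lt hi,
    Nat.mod_eq_of_lt hi, add_zero]

variable (d m x₀)

noncomputable def string (k : ℕ) : ℕ → ℝ := fun i => pos d m x₀ k i / m

noncomputable def levelAvg (g : ℕ → ℝ) (ℓ : ℕ) : ℝ :=
  𝔼 j ∈ range (d ^ ℓ), g (pos d m x₀ ℓ j)

noncomputable def activeFrac (ℓ : ℕ) : ℝ :=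
  levelAvg d m x₀ (fun x => if 0 < x ∧ x < m then 1 else 0) ℓ

variable {d m x₀}

lemma string_mem_Icc (hx₀ : x₀ ≤ m) (k i : ℕ) : string d m x₀ k i ∈ Set.Icc 0 1 :=
  ⟨by unfold string; positivity,
    div_le_one_of_le₀ (by exact_mod_cast pos_le hx₀ k i) (Nat.cast_nonneg m)⟩

lemma blockAvg_string (hd : 0 < d) (hm : 2 * (d - 1) ≤ m) (hx₀ : x₀ ≤ m) {ℓ k : ℕ}
    (hℓ : ℓ ≤ k) (j : ℕ) :
    blockAvg (string d m x₀ k) (d ^ (k - ℓ)) j = pos d m x₀ ℓ j / m := by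
  have hf : ∀ ℓ j, 𝔼 i ∈ range d, (pos d m x₀ (ℓ + 1) (j * d + i) : ℝ) / m
      = (pos d m x₀ ℓ j : ℝ) / m := by
    intro ℓ j
    rw [← expect_div, expect_congr rfl fun i hi => by rw [pos_succ_mul_add ℓ j (mem_range.1 hi)],
      expect_step hd hm (pos_le hx₀ ℓ j)]
  have := blockAvg_of_expect_children (fun ℓ j => (pos d m x₀ ℓ j : ℝ) / m) hf (k - ℓ) ℓ j
  rwa [Nat.add_sub_cancel' hℓ] at this

lemma not_blockRep_of_interior (hd : 0 < d) (hm : 2 * (d - 1) ≤ m) (hx₀ : x₀ ≤ m) {ε : ℝ}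
    (hε : ε * m < d - 1) {ℓ k j : ℕ} (hℓ : ℓ < k)
    (hj : 0 < pos d m x₀ ℓ j ∧ pos d m x₀ ℓ j < m) :
    ¬ blockRep (string d m x₀ k) d k ε ℓ j := by
  intro hrep
  have h := hrep 0 (mem_range.2 hd)
  have hm0 : (0 : ℝ) < m := by exact_mod_cast hj.1.trans hj.2
  rw [blockAvg_string hd hm hx₀ hℓ.le, blockAvg_string hd hm hx₀ hℓ, pos_succ_mul_add ℓ j hd,
    ← sub_div, abs_div, abs_sub_comm, abs_step_zero_sub hd hm hj, Nat.abs_cast,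
    div_le_iff₀ hm0] at h
  linarith

lemma levelAvg_zero (g : ℕ → ℝ) : levelAvg d m x₀ g 0 = g x₀ := by
  simp [levelAvg, pos]

lemma levelAvg_succ (g : ℕ → ℝ) (ℓ : ℕ) :
    levelAvg d m x₀ g (ℓ + 1) = levelAvg d m x₀ (fun x => 𝔼 i ∈ range d, g (step d m x i)) ℓ := by
  rw [levelAvg, levelAvg, pow_succ, expect_range_mul]
  exact expect_congr rfl fun p _ =>
    expect_congr rfl fun q hq => by rw [pos_succ_mul_add ℓ p (mem_range.1 hq)]

lemma activeFrac_zero (hx₀ : 0 < x₀ ∧ x₀ < m) : activeFrac d m x₀ 0 = 1 := by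
  rw [activeFrac, levelAvg_zero, if_pos hx₀]

lemma activeFrac_nonneg (ℓ : ℕ) : 0 ≤ activeFrac d m x₀ ℓ :=
  expect_nonneg fun _ _ => by positivity

lemma activeFrac_le_badFrac (hd : 0 < d) (hm : 2 * (d - 1) ≤ m) (hx₀ : x₀ ≤ m) {ε : ℝ}
    (hε : ε * m < d - 1) {ℓ k : ℕ} (hℓ : ℓ < k) :
    activeFrac d m x₀ ℓ ≤ badFrac (string d m x₀ k) d k ε ℓ := by
  rw [activeFrac, levelAvg, expect_eq_sum_div_card, sum_boole, card_range, badFrac,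
    Nat.cast_pow]
  gcongr
  exact not_blockRep_of_interior hd hm hx₀ hε hℓ

/-- Absorbed nodes have absorbed children. -/
lemma activeFrac_succ_le (hd : 0 < d) (hx₀ : x₀ ≤ m) (ℓ : ℕ) :
    activeFrac d m x₀ (ℓ + 1) ≤ activeFrac d m x₀ ℓ := by
  rw [activeFrac, levelAvg_succ]
  refine expect_le_expect fun j _ => ?_
  by_cases h : 0 < pos d m x₀ ℓ j ∧ pos d m x₀ ℓ j < m
  · rw [if_pos h]
    exact expect_le (nonempty_range_iff.2 hd.ne') fun i _ => by split_ifs <;> norm_num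
  · simp [step_of_not_interior (pos_le hx₀ ℓ j) h, h]

lemma mul_activeFrac_le_sum (hd : 0 < d) (hx₀ : x₀ ≤ m) (k : ℕ) :
    k * activeFrac d m x₀ k ≤ ∑ ℓ ∈ range k, activeFrac d m x₀ ℓ := by
  have hanti : Antitone (activeFrac d m x₀) :=
    antitone_nat_of_succ_le (activeFrac_succ_le hd hx₀)
  simpa using sum_le_sum fun ℓ (hℓ : ℓ ∈ range k) => hanti (mem_range.1 hℓ).le

lemma levelAvg_sq_sub_start (hd : 0 < d) (hm : 2 * (d - 1) ≤ m) (hx₀ : x₀ ≤ m) (k : ℕ) :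
    levelAvg d m x₀ (fun x => ((x : ℝ) - x₀) ^ 2) k
      = (d - 1) * ∑ ℓ ∈ range k, activeFrac d m x₀ ℓ := by
  induction k with
  | zero => simp [levelAvg_zero]
  | succ k ih =>
    rw [levelAvg_succ, sum_range_succ, mul_add, ← ih, activeFrac, levelAvg, levelAvg, levelAvg,
      mul_expect, ← expect_add_distrib]
    exact expect_congr rfl fun j _ => expect_step_sub_sq hd hm (pos_le hx₀ k j) _

/-- Absorbed nodes sit at `0` or `m`, at distance at least `x₀` from a start `x₀ ≤ m / 2`. -/
lemma levelAvg_sq_sub_start_ge (hd : 0 < d) (hx₀ : 2 * x₀ ≤ m) (k : ℕ) :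
    (1 - activeFrac d m x₀ k) * x₀ ^ 2 ≤ levelAvg d m x₀ (fun x => ((x : ℝ) - x₀) ^ 2) k := by
  have hne : (range (d ^ k)).Nonempty := nonempty_range_iff.2 (pow_pos hd k).ne'
  have hlhs : (1 - activeFrac d m x₀ k) * x₀ ^ 2
      = levelAvg d m x₀ (fun x => (1 - if 0 < x ∧ x < m then 1 else 0) * (x₀ : ℝ) ^ 2) k := by
    rw [activeFrac, levelAvg, levelAvg, ← expect_mul, expect_sub_distrib, expect_const hne]
  rw [hlhs]
  refine expect_le_expect fun j _ => ?_
  dsimp only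
  have hle := pos_le (d := d) (by omega : x₀ ≤ m) k j
  by_cases h : 0 < pos d m x₀ k j ∧ pos d m x₀ k j < m
  · rw [if_pos h, sub_self, zero_mul]
    positivity
  · rw [if_neg h, sub_zero, one_mul]
    rcases (by omega : pos d m x₀ k j = 0 ∨ pos d m x₀ k j = m) with h0 | hm'
    · simp [h0]
    · have : (2 * x₀ : ℝ) ≤ m := by exact_mod_cast hx₀
      rw [hm']
      nlinarith

lemma min_le_sum_activeFrac (hd : 2 ≤ d) (hm : 2 * (d - 1) ≤ m) (hx₀ : 2 * x₀ ≤ m) (k : ℕ) :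
    min ((k : ℝ) / 2) ((x₀ : ℝ) ^ 2 / (2 * (d - 1))) ≤ ∑ ℓ ∈ range k, activeFrac d m x₀ ℓ := by
  have hd0 : 0 < d := by omega
  have hd1 : (0 : ℝ) < d - 1 := by
    have : (2 : ℝ) ≤ d := by exact_mod_cast hd
    linarith
  by_cases h : 1 / 2 ≤ activeFrac d m x₀ k
  · refine min_le_of_left_le ?_
    have := mul_activeFrac_le_sum hd0 (by omega : x₀ ≤ m) k
    nlinarith [(Nat.cast_nonneg k : (0 : ℝ) ≤ k)]
  · refine min_le_of_right_le ?_
    have := (levelAvg_sq_sub_start_ge hd0 hx₀ k).trans_eq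
      (levelAvg_sq_sub_start hd0 hm (by omega) k)
    rw [div_le_iff₀ (by positivity)]
    nlinarith [sq_nonneg (x₀ : ℝ)]


lemma exists_walk_size (hd : 2 ≤ d) {ε : ℝ} (hε : ε ∈ Set.Ioo (0 : ℝ) (1 / 2)) :
    ∃ m : ℕ, 2 * (d - 1) ≤ m ∧ ε * m < d - 1 ∧ d - 1 ≤ ε * (m + 1) := by
  obtain ⟨hε0, hε⟩ := hε
  have hd' : (2 : ℝ) ≤ d := by exact_mod_cast hd
  obtain ⟨m, hm, hεm, hεm'⟩ := exists_nat_ge_lt_le_add_one (n := 2 * (d - 1)) (r := (d - 1) / ε)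
    (by rw [lt_div_iff₀ hε0]; push_cast [(by omega : 1 ≤ d)]; nlinarith)
  rw [lt_div_iff₀ hε0] at hεm
  rw [div_le_iff₀ hε0] at hεm'
  exact ⟨m, hm, by linarith, by linarith⟩

lemma delta_mul_lt_sum_activeFrac {k : ℕ} {ε δ : ℝ} (hd : 2 ≤ d) (hm : 2 * (d - 1) ≤ m)
    (hεm : d - 1 ≤ ε * (m + 1)) (hε : 0 < ε) (hδ : δ ∈ Set.Ioo (0 : ℝ) (1 / 2)) (hk : 0 < k)
    (hk' : (k : ℝ) < 1 / 128 * d / (ε ^ 2 * δ) + 1) :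
    δ * k < ∑ ℓ ∈ range k, activeFrac d m (m / 2) ℓ := by
  set S := ∑ ℓ ∈ range k, activeFrac d m (m / 2) ℓ
  obtain ⟨hδ0, hδ⟩ := hδ
  have hd' : (2 : ℝ) ≤ d := by exact_mod_cast hd
  have hk0 : (0 : ℝ) < k := by exact_mod_cast hk
  have hS : 1 ≤ S := by
    rw [← activeFrac_zero (d := d) (by omega : 0 < m / 2 ∧ m / 2 < m)]
    exact single_le_sum (fun ℓ _ => activeFrac_nonneg ℓ) (mem_range.2 hk)
  have hδk : δ * k < 1 / 128 * d / ε ^ 2 + δ := by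
    calc δ * k < δ * (1 / 128 * d / (ε ^ 2 * δ) + 1) := by gcongr
      _ = 1 / 128 * d / ε ^ 2 + δ := by field_simp
  rcases min_le_iff.1 (min_le_sum_activeFrac hd hm (Nat.mul_div_le m 2) k) with h | h
  · nlinarith
  · -- `m / 2 ≥ (m + 1) / 4 ≥ (d - 1) / (4 ε)`
    have hx₀ : (m + 1 : ℝ) ≤ 4 * (m / 2 : ℕ) := by exact_mod_cast (by omega : m + 1 ≤ 4 * (m / 2))
    have hd1 : (0 : ℝ) < d - 1 := by linarith
    have hdS : (d : ℝ) ≤ 64 * ε ^ 2 * S := by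
      rw [div_le_iff₀ (by positivity)] at h
      have : ((d : ℝ) - 1) ^ 2 ≤ (4 * ε * (m / 2 : ℕ)) ^ 2 := by gcongr; nlinarith
      nlinarith
    have : 1 / 128 * d / ε ^ 2 ≤ S / 2 := by
      rw [div_le_iff₀ (by positivity)]
      linarith
    linarith

end AbsorbedWalk

/-- There is a universal constant `c > 0` such that for every `d ≥ 2` and
`ε, δ ∈ (0, 1/2)`, setting `k = ⌈c d / (ε² δ)⌉`, there is a string of length
`d ^ k` with entries in `[0,1]` that is not `(d, ε, δ)`-locally repetitive. -/
theorem exists_not_locally_repetitive :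
    ∃ c : ℝ, 0 < c ∧ ∀ d : ℕ, 2 ≤ d → ∀ ε δ : ℝ,
      ε ∈ Set.Ioo (0 : ℝ) (1 / 2) → δ ∈ Set.Ioo (0 : ℝ) (1 / 2) →
      ∀ k : ℕ, k = ⌈c * d / (ε ^ 2 * δ)⌉₊ →
        ∃ s : ℕ → ℝ, (∀ i < d ^ k, s i ∈ Set.Icc (0 : ℝ) 1) ∧
          δ < (1 / k : ℝ) * ∑ ℓ ∈ Finset.range k, badFrac s d k ε ℓ := by
  refine ⟨1 / 128, by norm_num, fun d hd ε δ hε hδ k hk => ?_⟩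
  obtain ⟨m, hm, hεm, hεm'⟩ := AbsorbedWalk.exists_walk_size hd hε
  have hpos : 0 < 1 / 128 * (d : ℝ) / (ε ^ 2 * δ) := by
    have := hε.1; have := hδ.1; positivity
  have hk0 : 0 < k := hk ▸ Nat.ceil_pos.2 hpos
  have hk' : (k : ℝ) < 1 / 128 * d / (ε ^ 2 * δ) + 1 := hk ▸ Nat.ceil_lt_add_one hpos.le
  refine ⟨AbsorbedWalk.string d m (m / 2) k,
    fun i _ => AbsorbedWalk.string_mem_Icc (Nat.div_le_self m 2) k i, ?_⟩
  rw [one_div, inv_mul_eq_div, lt_div_iff₀ (by exact_mod_cast hk0)]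
  calc δ * k < ∑ ℓ ∈ range k, AbsorbedWalk.activeFrac d m (m / 2) ℓ :=
        AbsorbedWalk.delta_mul_lt_sum_activeFrac hd hm hεm' hε.1 hδ hk0 hk'
    _ ≤ ∑ ℓ ∈ range k, badFrac (AbsorbedWalk.string d m (m / 2) k) d k ε ℓ :=
        sum_le_sum fun ℓ hℓ => AbsorbedWalk.activeFrac_le_badFrac (by omega) hm
          (Nat.div_le_self m 2) hεm (mem_range.1 hℓ)
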